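/- arXiv:1206.6168 — 2 statements merged into one kernel-verified Lean document; each statement's English description precedes it below -/
import Mathlib

section
/- For every complex number α on the unit circle, there exist unitary 2×2 matrices v and w such that the multiplicative commutator v w v⁻¹ w⁻¹ equals the diagonal matrix diag(α, conj(α)). -/
/-!
Take a square root `β` of `α`; it lies on the unit circle, so `conj β = β⁻¹`. Conjugating a
diagonal matrix by a permutation matrix permutes its diagonal, so the commutator of
`v = diag(β, conj β)` with the swap matrix is `diag(β / conj β, conj β / β) = diag(β², conj (β²))`.
-/

open Matrix

namespace Matrix

variable {n : Type*} [Fintype n] [DecidableEq n]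

theorem diagonal_mem_unitaryGroup {R : Type*} [CommRing R] [StarRing R] {d : n → R}
    (hd : ∀ i, d i ∈ unitary R) : diagonal d ∈ unitaryGroup n R := by
  rw [mem_unitaryGroup_iff', star_eq_conjTranspose, diagonal_conjTranspose,
    diagonal_mul_diagonal, ← diagonal_one]
  exact congrArg diagonal (funext fun i => Unitary.star_mul_self_of_mem (hd i))

theorem permMatrix_mem_unitaryGroup {R : Type*} [CommRing R] [StarRing R] (σ : Equiv.Perm n) :
    σ.permMatrix R ∈ unitaryGroup n R := by
  rw [mem_unitaryGroup_iff, star_eq_conjTranspose, conjTranspose_permMatrix, ← permMatrix_mul,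
    inv_mul_cancel, permMatrix_one]

theorem permMatrix_mul_diagonal {R : Type*} [Semiring R] (σ : Equiv.Perm n) (d : n → R) :
    σ.permMatrix R * diagonal d = diagonal (d ∘ σ) * σ.permMatrix R := by
  rw [PEquiv.toMatrix_toPEquiv_mul, PEquiv.mul_toMatrix_toPEquiv]
  ext i j
  simp [diagonal_apply, Equiv.eq_symm_apply]

theorem permMatrix_inv {R : Type*} [CommRing R] (σ : Equiv.Perm n) :
    (σ.permMatrix R)⁻¹ = σ⁻¹.permMatrix R :=
  inv_eq_right_inv (by rw [← permMatrix_mul, inv_mul_cancel, permMatrix_one])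

theorem diagonal_permMatrix_commutator {K : Type*} [Field K] {d : n → K} (hd : ∀ i, d i ≠ 0)
    (σ : Equiv.Perm n) :
    diagonal d * σ.permMatrix K * (diagonal d)⁻¹ * (σ.permMatrix K)⁻¹ =
      diagonal fun i => d i / d (σ i) := by
  have hd_inv : (diagonal d)⁻¹ = diagonal d⁻¹ := inv_eq_right_inv <| by
    rw [diagonal_mul_diagonal, ← diagonal_one]
    exact congrArg diagonal (funext fun i => mul_inv_cancel₀ (hd i))
  rw [hd_inv, permMatrix_inv, mul_assoc (diagonal d), permMatrix_mul_diagonal,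
    mul_assoc (diagonal d), mul_assoc (diagonal _), ← permMatrix_mul, inv_mul_cancel,
    permMatrix_one, mul_one, diagonal_mul_diagonal]
  simp only [Function.comp_apply, Pi.inv_apply, div_eq_mul_inv]

end Matrix

theorem product_commutator_diag (α : ℂ) (hα : ‖α‖ = 1) :
    ∃ v w : Matrix (Fin 2) (Fin 2) ℂ,
      v ∈ Matrix.unitaryGroup (Fin 2) ℂ ∧ w ∈ Matrix.unitaryGroup (Fin 2) ℂ ∧
      v * w * v⁻¹ * w⁻¹ = Matrix.diagonal ![α, (starRingEnd ℂ) α] := by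
  obtain ⟨β, rfl⟩ : ∃ β : ℂ, β ^ 2 = α := IsAlgClosed.exists_pow_nat_eq α two_pos
  have hβ : ‖β‖ = 1 := by
    rwa [norm_pow, pow_eq_one_iff_of_nonneg (norm_nonneg β) two_ne_zero] at hα
  have hβ_unitary : β ∈ unitary ℂ := by
    rw [Unitary.mem_iff_star_mul_self, Complex.star_def, Complex.conj_mul', hβ]
    norm_num
  have hβ_ne : β ≠ 0 := norm_ne_zero_iff.1 (hβ ▸ one_ne_zero)
  refine ⟨diagonal ![β, star β], (Equiv.swap 0 1).permMatrix ℂ,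
    diagonal_mem_unitaryGroup ?_, permMatrix_mem_unitaryGroup _, ?_⟩
  · exact Fin.forall_fin_two.2 ⟨hβ_unitary, Unitary.star_mem hβ_unitary⟩
  have hd_ne : ∀ i, ![β, star β] i ≠ 0 := Fin.forall_fin_two.2 ⟨hβ_ne, star_ne_zero.2 hβ_ne⟩
  rw [diagonal_permMatrix_commutator hd_ne]
  congr 1
  ext i
  fin_cases i <;> simp [← Complex.inv_eq_conj hβ] <;> ring
end

section
/- Let θ : [0,1] → ℝ be continuous. Then there exist unitaries v₁, w₁, v₂, w₂, v₃, w₃, v₄, w₄ in the unitary group of M₂(C[0,1]) such that for all s ∈ [0,1], the product of the four commutators (v₁(s),w₁(s))(v₂(s),w₂(s))(v₃(s),w₃(s))(v₄(s),w₄(s)) equals diag(e^{iθ(s)}, e^{−iθ(s)}). -/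
/-!
A single commutator suffices. Conjugating `diag(a, 1)` by the swap matrix `P` gives `diag(1, a)`,
so for `a = e^{iθ}` the commutator of `diag(a, 1)` and `P` is `diag(a, a⁻¹)`; both are unitary
pointwise and continuous in `s`, and the remaining three commutators are taken trivial.
-/

open Complex Matrix

theorem List.prod_ofFn_commutator_mulSingle_zero {G : Type*} [Group G] {n : ℕ} (a b : G) :
    (List.ofFn fun j : Fin (n + 1) => Pi.mulSingle 0 a j * Pi.mulSingle 0 b j *
      (Pi.mulSingle 0 a j)⁻¹ * (Pi.mulSingle 0 b j)⁻¹).prod = a * b * a⁻¹ * b⁻¹ := by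
  simp [List.ofFn_succ, Pi.mulSingle_apply, Fin.succ_ne_zero]

theorem ContinuousMap.mem_unitary_iff {X A : Type*} [TopologicalSpace X] [TopologicalSpace A]
    [Monoid A] [ContinuousMul A] [StarMul A] [ContinuousStar A] (f : C(X, A)) :
    f ∈ unitary C(X, A) ↔ ∀ x, f x ∈ unitary A := by
  simp only [Unitary.mem_iff, ContinuousMap.ext_iff, ContinuousMap.mul_apply,
    ContinuousMap.star_apply, ContinuousMap.one_apply, forall_and]

theorem Matrix.diagonal_mem_unitary {n α : Type*} [Fintype n] [DecidableEq n] [Semiring α]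
    [StarRing α] {d : n → α} (hd : ∀ i, d i ∈ unitary α) :
    diagonal d ∈ unitary (Matrix n n α) := by
  simp only [Unitary.mem_iff, star_eq_conjTranspose, diagonal_conjTranspose,
    diagonal_mul_diagonal, ← diagonal_one, diagonal_eq_diagonal_iff]
  exact ⟨fun i => (hd i).1, fun i => (hd i).2⟩

theorem Complex.star_exp_I_mul (t : ℝ) : star (exp (I * t)) = exp (-(I * t)) := by
  rw [star_def, ← exp_conj, map_mul, conj_I, conj_ofReal, neg_mul]

theorem Complex.exp_I_mul_mem_unitary (t : ℝ) : exp (I * t) ∈ unitary ℂ := by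
  rw [Unitary.mem_iff, star_exp_I_mul, ← exp_add, ← exp_add, neg_add_cancel, add_neg_cancel,
    exp_zero]
  exact ⟨rfl, rfl⟩

theorem Matrix.swap_mem_unitary {R : Type*} [Semiring R] [StarRing R] :
    !![0, 1; 1, 0] ∈ unitary (Matrix (Fin 2) (Fin 2) R) := by
  constructor <;>
  · ext i j
    fin_cases i <;> fin_cases j <;> simp [Matrix.mul_apply, star_eq_conjTranspose]

theorem Matrix.diagonal_swap_commutator {R : Type*} [Semiring R] [StarRing R] (a : R) :
    diagonal ![a, 1] * !![0, 1; 1, 0] * star (diagonal ![a, 1]) * star !![0, 1; 1, 0] =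
      diagonal ![a, star a] := by
  ext i j
  fin_cases i <;> fin_cases j <;> simp [Matrix.mul_apply, Fin.sum_univ_two, star_eq_conjTranspose]

/-- For a continuous `θ : [0,1] → ℝ` there are unitaries `v₁,w₁,…,v₄,w₄` in
`M₂(C[0,1])` whose commutator product is pointwise `diag(e^{iθ(s)}, e^{−iθ(s)})`. -/
theorem exists_four_commutators_diag_theta
    (θ : C(Set.Icc (0:ℝ) 1, ℝ)) :
    ∃ v w : Fin 4 → unitary (C(Set.Icc (0:ℝ) 1, Matrix (Fin 2) (Fin 2) ℂ)),
      ∀ s : Set.Icc (0:ℝ) 1,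
        (((List.ofFn (fun j => v j * w j * (v j)⁻¹ * (w j)⁻¹)).prod :
            unitary (C(Set.Icc (0:ℝ) 1, Matrix (Fin 2) (Fin 2) ℂ))) :
              C(Set.Icc (0:ℝ) 1, Matrix (Fin 2) (Fin 2) ℂ)) s =
          Matrix.diagonal ![Complex.exp (Complex.I * (θ s : ℝ)),
            Complex.exp (-(Complex.I * (θ s : ℝ)))] := by
  let d : C(Set.Icc (0:ℝ) 1, Matrix (Fin 2) (Fin 2) ℂ) :=
    ⟨fun s => diagonal ![exp (I * θ s), 1], by fun_prop⟩
  let p : C(Set.Icc (0:ℝ) 1, Matrix (Fin 2) (Fin 2) ℂ) := .const _ !![0, 1; 1, 0]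
  have hd : d ∈ unitary _ := (ContinuousMap.mem_unitary_iff d).2 fun s =>
    diagonal_mem_unitary fun i => by
      fin_cases i
      exacts [exp_I_mul_mem_unitary _, one_mem _]
  have hp : p ∈ unitary _ := (ContinuousMap.mem_unitary_iff p).2 fun _ => swap_mem_unitary
  refine ⟨Pi.mulSingle 0 ⟨d, hd⟩, Pi.mulSingle 0 ⟨p, hp⟩, fun s => ?_⟩
  rw [List.prod_ofFn_commutator_mulSingle_zero, ← Unitary.star_eq_inv, ← Unitary.star_eq_inv,
    ← star_exp_I_mul]
  exact diagonal_swap_commutator _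
end
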